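/- For every real ψ and every real ψ₀ ≠ 0, log(1 + exp ψ) ≤ log(1 + exp ψ₀) + (1/2)(ψ − ψ₀) + (tanh(ψ₀/2)/(4ψ₀))·(ψ² − ψ₀²), with equality when ψ = ψ₀. -/

import Mathlib

/-!
Since `1 + exp ψ = 2 exp (ψ / 2) cosh (ψ / 2)`, the bound is the tangent inequality
`log (cosh u) ≤ log (cosh v) + tanh v / (2 v) * (u ^ 2 - v ^ 2)` at `u = ψ / 2`, `v = ψ₀ / 2`.
Both sides are even in `u` and in `v`, so take `u ≥ 0`, `v > 0`. The difference
`log (cosh u) - tanh v / (2 v) * u ^ 2` has derivative `tanh u - (tanh v / v) u`, which is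
nonnegative for `u ≤ v` and nonpositive for `u ≥ v` because `tanh x / x` decreases on `x > 0`.
That monotonicity is, after the addition formulas, the statement that `sinh x / x` increases,
i.e. that `sinh` is convex on `[0, ∞)` and vanishes at `0`.
-/

open Real Set

theorem ConvexOn.mul_map_le_mul_map_of_map_zero {s : Set ℝ} {f : ℝ → ℝ} {p q : ℝ}
    (hf : ConvexOn ℝ s f) (h0 : 0 ∈ s) (hf0 : f 0 = 0) (hq : q ∈ s)
    (hp : 0 ≤ p) (hpq : p ≤ q) : q * f p ≤ p * f q := by
  rcases hpq.lt_or_eq with hpq | rfl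
  · have hq0 : 0 < q := hp.trans_lt hpq
    have hb : p / q ≤ 1 := div_le_one_of_le₀ hpq.le hq0.le
    have h := hf.2 h0 hq (sub_nonneg.2 hb) (div_nonneg hp hq0.le) (sub_add_cancel 1 (p / q))
    rw [smul_zero, zero_add, smul_eq_mul, div_mul_cancel₀ p hq0.ne', hf0, smul_zero,
      zero_add, smul_eq_mul, div_mul_eq_mul_div, le_div_iff₀ hq0] at h
    linarith
  · exact le_rfl

theorem convexOn_sinh_Ici : ConvexOn ℝ (Ici 0) sinh := by
  refine MonotoneOn.convexOn_of_deriv (convex_Ici 0) continuous_sinh.continuousOn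
    differentiable_sinh.differentiableOn ?_
  rw [Real.deriv_sinh, interior_Ici]
  intro x hx y hy hxy
  rw [cosh_le_cosh, abs_of_pos hx, abs_of_pos hy]
  exact hxy

theorem mul_tanh_le_mul_tanh {s t : ℝ} (hs : 0 ≤ s) (hst : s ≤ t) :
    s * tanh t ≤ t * tanh s := by
  have key := convexOn_sinh_Ici.mul_map_le_mul_map_of_map_zero self_mem_Ici sinh_zero
    (show 0 ≤ t + s by linarith) (sub_nonneg.2 hst) (by linarith)
  rw [sinh_sub, sinh_add] at key
  rw [tanh_eq_sinh_div_cosh, tanh_eq_sinh_div_cosh, mul_div_assoc', mul_div_assoc',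
    div_le_div_iff₀ (cosh_pos t) (cosh_pos s)]
  linear_combination key / 2

theorem hasDerivAt_log_cosh (x : ℝ) : HasDerivAt (fun x => log (cosh x)) (tanh x) x := by
  simpa only [← tanh_eq_sinh_div_cosh] using (hasDerivAt_cosh x).log (cosh_pos x).ne'

theorem log_cosh_le_of_nonneg {u v : ℝ} (hu : 0 ≤ u) (hv : 0 < v) :
    log (cosh u) ≤ log (cosh v) + tanh v / (2 * v) * (u ^ 2 - v ^ 2) := by
  set c := tanh v / v
  set F : ℝ → ℝ := fun x => log (cosh x) - c / 2 * x ^ 2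
  have hF : ∀ x, HasDerivAt F (tanh x - c * x) x := fun x => by
    refine ((hasDerivAt_log_cosh x).sub ((hasDerivAt_pow 2 x).const_mul (c / 2))).congr_deriv ?_
    ring
  have hF_diff : Differentiable ℝ F := fun x => (hF x).differentiableAt
  have hcx : ∀ x, c * x = x * tanh v / v := fun x => by ring
  suffices F u ≤ F v by
    have hc : tanh v / (2 * v) = c / 2 := by ring
    simp only [F] at this
    rw [hc]
    linarith
  rcases le_total u v with huv | hvu
  · refine monotoneOn_of_deriv_nonneg (convex_Icc 0 v) hF_diff.continuous.continuousOn
      hF_diff.differentiableOn (fun x hx => ?_) ⟨hu, huv⟩ ⟨hv.le, le_rfl⟩ huv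
    rw [interior_Icc] at hx
    rw [(hF x).deriv, sub_nonneg, hcx, div_le_iff₀ hv, mul_comm (tanh x)]
    exact mul_tanh_le_mul_tanh hx.1.le hx.2.le
  · refine antitoneOn_of_deriv_nonpos (convex_Ici v) hF_diff.continuous.continuousOn
      hF_diff.differentiableOn (fun x hx => ?_) self_mem_Ici hvu hvu
    rw [interior_Ici] at hx
    rw [(hF x).deriv, sub_nonpos, hcx, le_div_iff₀ hv, mul_comm (tanh x)]
    exact mul_tanh_le_mul_tanh hv.le hx.le

theorem log_cosh_le {v : ℝ} (hv : v ≠ 0) (u : ℝ) :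
    log (cosh u) ≤ log (cosh v) + tanh v / (2 * v) * (u ^ 2 - v ^ 2) := by
  have h := log_cosh_le_of_nonneg (abs_nonneg u) (abs_pos.2 hv)
  have h_even : tanh |v| / (2 * |v|) = tanh v / (2 * v) := by
    rcases abs_choice v with h | h <;> rw [h]
    rw [tanh_neg, mul_neg, neg_div_neg_eq]
  rwa [cosh_abs, cosh_abs, sq_abs, sq_abs, h_even] at h

theorem log_one_add_exp_eq (x : ℝ) :
    log (1 + exp x) = x / 2 + log 2 + log (cosh (x / 2)) := by
  have h : 1 + exp x = exp (x / 2) * (2 * cosh (x / 2)) := by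
    rw [cosh_eq, mul_div_cancel₀ _ two_ne_zero, mul_add, ← exp_add, ← exp_add]
    ring_nf
    simp [add_comm]
  rw [h, log_mul (exp_pos _).ne' (by positivity), log_exp,
    log_mul two_ne_zero (cosh_pos _).ne', add_assoc]

theorem polya_gamma_quadratic_bound (ψ ψ₀ : ℝ) (h : ψ₀ ≠ 0) :
    Real.log (1 + Real.exp ψ) ≤
        Real.log (1 + Real.exp ψ₀) + (1 / 2) * (ψ - ψ₀) +
          (Real.tanh (ψ₀ / 2) / (4 * ψ₀)) * (ψ ^ 2 - ψ₀ ^ 2) ∧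
      (ψ = ψ₀ →
        Real.log (1 + Real.exp ψ) =
          Real.log (1 + Real.exp ψ₀) + (1 / 2) * (ψ - ψ₀) +
            (Real.tanh (ψ₀ / 2) / (4 * ψ₀)) * (ψ ^ 2 - ψ₀ ^ 2)) := by
  refine ⟨?_, fun hψ => by rw [hψ]; ring⟩
  have key := log_cosh_le (div_ne_zero h two_ne_zero) (ψ / 2)
  have h_coeff : tanh (ψ₀ / 2) / (2 * (ψ₀ / 2)) * ((ψ / 2) ^ 2 - (ψ₀ / 2) ^ 2) =
      tanh (ψ₀ / 2) / (4 * ψ₀) * (ψ ^ 2 - ψ₀ ^ 2) := by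
    field_simp
    ring
  rw [log_one_add_exp_eq ψ, log_one_add_exp_eq ψ₀]
  linarith
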